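/- Let H ≤ Γ be countable groups, let H act on a countable set Y, and let Γ ↷ X be the induced action. Let (Σ_ε)_{ε∈E} be a family of subgroups of H each acting freely on Y. If for every g ∈ Γ \ H one has gHg⁻¹ ∩ H ⊆ ⋃_{ε∈E, s∈H} sΣ_εs⁻¹, then for every h ∈ H with Fix_Y(h) = ∅ one has Fix_X(h) = ∅. -/

import Mathlib

/-- `C` is a Følner sequence for the action of `G` on `X` given by `π`. -/
def IsFolnerSeq {G X : Type*} [Group G] (π : G →* Equiv.Perm X) (C : ℕ → Set X) : Prop :=
  (∀ n, (C n).Finite ∧ (C n).Nonempty) ∧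
    ∀ g : G, Filter.Tendsto
      (fun n => ((symmDiff (C n) (π g '' C n)).ncard : ℝ) / (C n).ncard)
      Filter.atTop (nhds 0)

/-- The action of `G` on `X` given by `π` is amenable (admits a Følner sequence). -/
def IsAmenableAction {G X : Type*} [Group G] (π : G →* Equiv.Perm X) : Prop :=
  ∃ C : ℕ → Set X, IsFolnerSeq π C

/-- The action given by `π` has infinite orbits. -/
def HasInfiniteOrbits {G X : Type*} [Group G] (π : G →* Equiv.Perm X) : Prop :=
  ∀ x : X, {y : X | ∃ g : G, π g x = y}.Infinite

/-- The action given by `π` is transitive. -/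
def IsTransitiveAction {G X : Type*} [Group G] (π : G →* Equiv.Perm X) : Prop :=
  ∀ x y : X, ∃ g : G, π g x = y

/-- The action given by `π` is almost free: every non-trivial element has finitely many
fixed points. -/
def IsAlmostFreeAction {G X : Type*} [Group G] (π : G →* Equiv.Perm X) : Prop :=
  ∀ g : G, g ≠ 1 → {x : X | π g x = x}.Finite

/-- The class 𝒜 of countable groups admitting a faithful, transitive and amenable action
on an infinite countable set. -/
def InClassA (G : Type*) [Group G] : Prop :=
  ∃ (X : Type) (_ : Countable X) (_ : Infinite X) (π : G →* Equiv.Perm X),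
    Function.Injective π ∧ IsTransitiveAction π ∧ IsAmenableAction π

/-- The class 𝒜_ℱ of countable groups admitting an amenable, almost free action with
infinite orbits on a countable set. -/
def InClassAF (G : Type*) [Group G] : Prop :=
  ∃ (X : Type) (_ : Countable X) (π : G →* Equiv.Perm X),
    IsAmenableAction π ∧ IsAlmostFreeAction π ∧ HasInfiniteOrbits π
section InducedAction

variable {Γ : Type*} [Group Γ] (H : Subgroup Γ) {Y : Type*} (π : H →* Equiv.Perm Y)

/-- The equivalence relation on `Y × Γ` given by the diagonal `H`-action
`h • (y, g) = (h • y, h * g)`. -/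
def indSetoid : Setoid (Y × Γ) where
  r p q := ∃ h : H, π h p.1 = q.1 ∧ (h : Γ) * p.2 = q.2
  iseqv := by
    constructor
    · intro p
      exact ⟨1, by simp, by simp⟩
    · rintro p q ⟨h, h1, h2⟩
      refine ⟨h⁻¹, ?_, ?_⟩
      · rw [← h1]; simp
      · rw [← h2]; simp [mul_assoc]
    · rintro p q r ⟨h, h1, h2⟩ ⟨k, k1, k2⟩
      refine ⟨k * h, ?_, ?_⟩
      · rw [← k1, ← h1]; simp
      · rw [← k2, ← h2]; simp [mul_assoc]

/-- The underlying set `X = H \ (Y × Γ)` of the induced action. -/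
def IndSpace : Type _ := Quotient (indSetoid H π)

/-- The induced action of `Γ` on `X = H \ (Y × Γ)`, given by `γ • [y, g] = [y, g * γ⁻¹]`. -/
def indHom : Γ →* Equiv.Perm (IndSpace H π) where
  toFun γ :=
    { toFun := Quotient.map' (fun p => (p.1, p.2 * γ⁻¹))
        (by rintro p q ⟨h, h1, h2⟩; exact ⟨h, h1, by show (h : Γ) * (p.2 * _) = q.2 * _; rw [← h2, mul_assoc]⟩)
      invFun := Quotient.map' (fun p => (p.1, p.2 * γ))
        (by rintro p q ⟨h, h1, h2⟩; exact ⟨h, h1, by show (h : Γ) * (p.2 * _) = q.2 * _; rw [← h2, mul_assoc]⟩)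
      left_inv := by
        intro x
        induction x using Quotient.inductionOn' with
        | h p => simp [Quotient.map'_mk'', mul_assoc]; rfl
      right_inv := by
        intro x
        induction x using Quotient.inductionOn' with
        | h p => simp [Quotient.map'_mk'', mul_assoc]; rfl }
  map_one' := by
    apply Equiv.ext
    intro x
    induction x using Quotient.inductionOn' with
    | h p => exact congrArg Quotient.mk'' (by simp)
  map_mul' γ₁ γ₂ := by
    apply Equiv.ext
    intro x
    induction x using Quotient.inductionOn' with
    | h p => exact congrArg Quotient.mk'' (by simp [mul_assoc])

end InducedAction

/-! If `h ∈ H` fixes `[y, g]`, then `k = g h g⁻¹` lies in `H` and fixes `y`. For `g ∈ H` this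
makes `π g⁻¹ y` a fixed point of `h`. For `g ∉ H` the hypothesis on `gHg⁻¹ ∩ H` conjugates `k`
inside `H` into some `Σ ε`; since `Σ ε` acts freely and the conjugate still has a fixed point,
`k = 1`, hence `h = 1`, which fixes every point of `Y`. -/

theorem MonoidHom.perm_conj_apply_eq_self_iff {G Y : Type*} [Group G] (π : G →* Equiv.Perm Y)
    (a b : G) (y : Y) : π (a * b * a⁻¹) y = y ↔ π b (π a⁻¹ y) = π a⁻¹ y := by
  rw [map_mul, map_mul, map_inv, Equiv.Perm.mul_apply, Equiv.Perm.mul_apply,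
    ← Equiv.Perm.eq_inv_iff_eq]

section InducedAction

variable {Γ : Type*} [Group Γ] (H : Subgroup Γ) {Y : Type*} (π : H →* Equiv.Perm Y)

theorem indHom_mk_eq_self_iff (γ g : Γ) (y : Y) :
    indHom H π γ (Quotient.mk'' (y, g)) = Quotient.mk'' (y, g) ↔
      ∃ k : H, π k y = y ∧ (k : Γ) = g * γ * g⁻¹ := by
  change Quotient.mk'' (y, g * γ⁻¹) = _ ↔ _
  rw [Quotient.eq'']
  refine exists_congr fun k => and_congr_right fun _ => ?_
  change (k : Γ) * (g * γ⁻¹) = g ↔ _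
  rw [← eq_mul_inv_iff_mul_eq, mul_inv_rev, inv_inv, mul_assoc]

theorem eq_one_of_apply_eq_self_of_conj_mem {E : Type*} (Sig : E → Subgroup Γ)
    (hfree : ∀ (ε : E) (h : H), (h : Γ) ∈ Sig ε → h ≠ 1 → ∀ y : Y, π h y ≠ y)
    (hcond : ∀ g : Γ, g ∉ H → ∀ x : Γ, x ∈ H → g⁻¹ * x * g ∈ H →
       ∃ (ε : E) (s : Γ), s ∈ H ∧ s⁻¹ * x * s ∈ Sig ε)
    {g : Γ} (hg : g ∉ H) (k : H) (hk : g⁻¹ * k * g ∈ H) {y : Y} (hy : π k y = y) : k = 1 := by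
  obtain ⟨ε, s, hs, hsig⟩ := hcond g hg k k.2 hk
  set u : H := ⟨s, hs⟩
  set m : H := u⁻¹ * k * u
  have hk_eq : k = u * m * u⁻¹ := by simp [m, mul_assoc]
  rw [hk_eq, MonoidHom.perm_conj_apply_eq_self_iff] at hy
  have hm : m = 1 := by
    by_contra hne
    exact hfree ε m hsig hne _ hy
  rw [hk_eq, hm, mul_one, mul_inv_cancel]

end InducedAction

theorem induced_action_no_fixed_points_general
    {Γ Y : Type*} [Group Γ]
    (H : Subgroup Γ) (π : H →* Equiv.Perm Y)
    {E : Type*} (Sig : E → Subgroup Γ)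
    (hfree : ∀ (ε : E) (h : H), (h : Γ) ∈ Sig ε → h ≠ 1 → ∀ y : Y, π h y ≠ y)
    (hcond : ∀ g : Γ, g ∉ H → ∀ x : Γ, x ∈ H → g⁻¹ * x * g ∈ H →
       ∃ (ε : E) (s : Γ), s ∈ H ∧ s⁻¹ * x * s ∈ Sig ε) :
    ∀ h : H, (∀ y : Y, π h y ≠ y) →
      ∀ x : IndSpace H π, indHom H π (h : Γ) x ≠ x := by
  intro h hh x hx
  induction x using Quotient.inductionOn' with
  | h p =>
    obtain ⟨y, g⟩ := p
    obtain ⟨k, hky, hk⟩ := (indHom_mk_eq_self_iff H π h g y).1 hx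
    by_cases hg : g ∈ H
    · have hk_conj : k = ⟨g, hg⟩ * h * ⟨g, hg⟩⁻¹ := Subtype.ext hk
      rw [hk_conj, MonoidHom.perm_conj_apply_eq_self_iff] at hky
      exact hh _ hky
    · have hk_conj : g⁻¹ * k * g ∈ H := by simp [hk, mul_assoc]
      have hk1 : k = 1 := eq_one_of_apply_eq_self_of_conj_mem H π Sig hfree hcond hg k hk_conj hky
      have hh1 : h = 1 := Subtype.ext <| by
        rwa [hk1, eq_comm, OneMemClass.coe_one, conj_eq_one_iff] at hk
      exact hh y (by simp [hh1])

/-- **Lemma 2.5 (5).**  Let `H ≤ Γ` be countable groups, `H ↷ Y` an action on a countable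
set and `Γ ↷ X` the induced action.  Let `(Σ ε)_{ε ∈ E}` be a family of subgroups of `H`
each acting freely on `Y`.  If for every `g ∈ Γ \ H` one has
`gHg⁻¹ ∩ H ⊆ ⋃_{ε ∈ E, s ∈ H} s (Σ ε) s⁻¹`, then every `h ∈ H` with no fixed point in
`Y` has no fixed point in `X`. -/
theorem induced_action_no_fixed_points
    {Γ Y : Type*} [Group Γ] [Countable Γ] [Countable Y]
    (H : Subgroup Γ) (π : H →* Equiv.Perm Y)
    {E : Type*} (Sig : E → Subgroup Γ) (hsub : ∀ ε, Sig ε ≤ H)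
    (hfree : ∀ (ε : E) (h : H), (h : Γ) ∈ Sig ε → h ≠ 1 → ∀ y : Y, π h y ≠ y)
    (hcond : ∀ g : Γ, g ∉ H → ∀ x : Γ, x ∈ H → g⁻¹ * x * g ∈ H →
       ∃ (ε : E) (s : Γ), s ∈ H ∧ s⁻¹ * x * s ∈ Sig ε) :
    ∀ h : H, (∀ y : Y, π h y ≠ y) →
      ∀ x : IndSpace H π, indHom H π (h : Γ) x ≠ x :=
  induced_action_no_fixed_points_general H π Sig hfree hcond
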